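/- (Proposition 6, variance-aware 2p-order game under multiplicative noise.) In the setting of the multiplicative-noise dynamics x_{k+1} = ā_k·x_k + Σ_{i=1}^I b̄_{ik}·u_{ik} + (x_k − x̄_k)·ε_{k+1}, fix an integer p ≥ 1 and the cost E[L_i] with L_i = q_{iN}·var(x_N) + q̄_{iN}·x̄_N^(2p) + Σ_{k=0}^{N−1} (q_{ik}·var(x_k) + q̄_{ik}·x̄_k^(2p) + r_{ik}·var(u_{ik}) + r̄_{ik}·ū_{ik}^(2p)), all weights positive. Define backwards ᾱ_{iN} = q̄_{iN}, α_{iN} = q_{iN}; κ_{ik} = the real (2p−1)-th root of ᾱ_{i,k+1}·b̄_{ik}/r̄_{ik}, c̄_{ik} = κ_{ik}/(1 + κ_{ik}·b̄_{ik}), c_{ik} = α_{i,k+1}·b̄_{ik}/(r_{ik} + α_{i,k+1}·b̄_{ik}²); Ē_k, E_k the I×I matrices with unit diagonal and off-diagonal entries c̄_{ik}·b̄_{jk}, c_{ik}·b̄_{jk}; ᾱ_{ik} = q̄_{ik} + r̄_{ik}·((Ē_k⁻¹·c̄_k)_i·ā_k)^(2p) + ᾱ_{i,k+1}·(ā_k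 − Σ_j (Ē_k⁻¹·c̄_k)_j·ā_k·b̄_{jk})^(2p); α_{ik} = q_{ik} + r_{ik}·((E_k⁻¹·c_k)_i·ā_k)² + α_{i,k+1}·(ā_k − Σ_j (E_k⁻¹·c_k)_j·ā_k·b̄_{jk})² + α_{i,k+1}·E[ε_{k+1}²]. Assume for every k that Ē_k and E_k are invertible, 1 + κ_{ik}·b̄_{ik} > 0, and r_{ik} + α_{i,k+1}·b̄_{ik}² > 0 for all i. Then the feedback strategies u*_{ik} = −(E_k⁻¹·c_k)_i·ā_k·(x_k − x̄_k) − (Ē_k⁻¹·c̄_k)_i·ā_k·x̄_k form a Nash equilibrium over adapted square-integrable strategies, and the equilibrium expected cost of agent i equals α_{i0}·var(x_0) + ᾱ_{i0}·(E[x_0])^(2p). -/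

import Mathlib

open MeasureTheory ProbabilityTheory

/-- The σ-algebra `σ(x₀, ε₁, …, ε_k)` generated by the initial state and the
noises up to time `k`. -/
def sigmaUpTo {Ω : Type*} (x0 : Ω → ℝ) (eps : ℕ → Ω → ℝ) (k : ℕ) :
    MeasurableSpace Ω :=
  MeasurableSpace.comap x0 inferInstance
    ⊔ ⨆ j ∈ Finset.Icc 1 k, MeasurableSpace.comap (eps j) inferInstance

/-- The state-and-mean-field-type feedback
`−(Ē⁻¹·c̄)_j·ā·x̄ − (E⁻¹·c)_j·ā·(x − x̄)` of agent `j`. -/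
noncomputable def mfFeedback {I : ℕ} (Ebar E : Matrix (Fin I) (Fin I) ℝ)
    (cbar c : Fin I → ℝ) (a m ξ : ℝ) (j : Fin I) : ℝ :=
  -(Ebar⁻¹.mulVec cbar j) * a * m - (E⁻¹.mulVec c j) * a * (ξ - m)

/-- The variance-aware `2p`-order cost of an agent along a state trajectory `x`
with own controls `v`. -/
noncomputable def powerVarCost {Ω : Type*} [MeasurableSpace Ω]
    (μ : Measure Ω) (N p : ℕ) (qN qbarN : ℝ) (q qbar r rbar : ℕ → ℝ)
    (x v : ℕ → Ω → ℝ) : ℝ :=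
  qN * variance (x N) μ + qbarN * (∫ ω, x N ω ∂μ) ^ (2 * p)
    + ∑ k ∈ Finset.range N,
        (q k * variance (x k) μ + qbar k * (∫ ω, x k ω ∂μ) ^ (2 * p)
          + r k * variance (v k) μ + rbar k * (∫ ω, v k ω ∂μ) ^ (2 * p))


lemma tangent_pow (p : ℕ) (x y : ℝ) :
    y ^ (2*p) + (2*p : ℝ) * y ^ (2*p - 1) * (x - y) ≤ x ^ (2*p) := by
  have hcv : ConvexOn ℝ Set.univ fun t : ℝ => t ^ (2*p) :=
    (even_two_mul p).convexOn_pow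
  have hderiv : ∀ t : ℝ, HasDerivAt (fun s : ℝ => s ^ (2*p)) ((2*p : ℝ) * t ^ (2*p-1)) t := by
    intro t; simpa using hasDerivAt_pow (2*p) t
  rcases lt_trichotomy x y with h | h | h
  · have h1 := hcv.slope_le_of_hasDerivAt (Set.mem_univ x) (Set.mem_univ y) h (hderiv y)
    rw [slope_def_field] at h1
    have h2 : y ^ (2*p) - x ^ (2*p) ≤ (2*p:ℝ) * y ^ (2*p-1) * (y - x) := by
      have hyx : (0:ℝ) < y - x := by linarith
      calc y ^ (2*p) - x ^ (2*p) = (y ^ (2*p) - x ^ (2*p)) / (y - x) * (y - x) := by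
            field_simp
        _ ≤ (2*p:ℝ) * y ^ (2*p-1) * (y - x) := by
            apply mul_le_mul_of_nonneg_right _ hyx.le
            simpa [div_eq_div_iff] using h1
    linarith [h2]
  · subst h; simp
  · have h1 := hcv.le_slope_of_hasDerivAt (Set.mem_univ y) (Set.mem_univ x) h (hderiv y)
    rw [slope_def_field] at h1
    have hxy : (0:ℝ) < x - y := by linarith
    have h2 : (2*p:ℝ) * y ^ (2*p-1) * (x - y) ≤ x ^ (2*p) - y ^ (2*p) := by
      calc (2*p:ℝ) * y ^ (2*p-1) * (x - y) ≤ (x ^ (2*p) - y ^ (2*p)) / (x - y) * (x - y) := by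
            apply mul_le_mul_of_nonneg_right _ hxy.le
            simpa using h1
        _ = x ^ (2*p) - y ^ (2*p) := by field_simp
    linarith

/-- minimum of `R u^{2p} + A (B + b u)^{2p}` at a stationary point, for `R, A ≥ 0`. -/
lemma tangent_min (p : ℕ) (R A B bb us u : ℝ) (hR : 0 ≤ R) (hA : 0 ≤ A)
    (hstat : R * us ^ (2*p - 1) + A * bb * (B + bb * us) ^ (2*p - 1) = 0) :
    R * us ^ (2*p) + A * (B + bb * us) ^ (2*p)
      ≤ R * u ^ (2*p) + A * (B + bb * u) ^ (2*p) := by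
  have t1 := tangent_pow p u us
  have t2 := tangent_pow p (B + bb * u) (B + bb * us)
  have key : R * us ^ (2*p) + A * (B + bb * us) ^ (2*p)
      = R * (us ^ (2*p) + (2*p:ℝ) * us ^ (2*p-1) * (u - us))
        + A * ((B + bb*us) ^ (2*p)
            + (2*p:ℝ) * (B + bb*us) ^ (2*p-1) * ((B + bb*u) - (B + bb*us))) := by
    linear_combination (-(2*p:ℝ) * (u - us)) * hstat
  rw [key]
  exact add_le_add (mul_le_mul_of_nonneg_left t1 hR) (mul_le_mul_of_nonneg_left t2 hA)

lemma mul_L2_integrable {Ω : Type*} [MeasurableSpace Ω] {μ : Measure Ω}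
    {f g : Ω → ℝ} (hf : MemLp f 2 μ) (hg : MemLp g 2 μ) :
    Integrable (fun ω => f ω * g ω) μ := by
  have h1 := hf.integrable_sq
  have h2 := hg.integrable_sq
  refine Integrable.mono' ((h1.add h2).const_mul (1/2 : ℝ))
    (hf.aestronglyMeasurable.mul hg.aestronglyMeasurable) ?_
  filter_upwards with ω
  have := sq_nonneg (|f ω| - |g ω|)
  have habs : ‖f ω * g ω‖ = |f ω| * |g ω| := by rw [Real.norm_eq_abs, abs_mul]
  rw [habs]
  simp only [Pi.add_apply]
  nlinarith [sq_nonneg (|f ω| - |g ω|), sq_abs (f ω), sq_abs (g ω)]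

lemma variance_integral {Ω : Type*} [MeasurableSpace Ω] {μ : Measure Ω}
    [IsProbabilityMeasure μ] {X : Ω → ℝ} (hX : MemLp X 2 μ) :
    variance X μ = ∫ ω, (X ω - ∫ ω', X ω' ∂μ) ^ 2 ∂μ := by
  rw [variance_eq_integral hX.aestronglyMeasurable.aemeasurable]

lemma sigmaUpTo_le_ambient {Ω : Type*} [MeasurableSpace Ω] {x0 : Ω → ℝ}
    {eps : ℕ → Ω → ℝ} (hx0m : Measurable x0) (hepsm : ∀ k, Measurable (eps k)) (k : ℕ) :
    sigmaUpTo x0 eps k ≤ ‹MeasurableSpace Ω› := by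
  refine sup_le hx0m.comap_le ?_
  exact iSup₂_le fun j _ => (hepsm j).comap_le

lemma sigmaUpTo_mono {Ω : Type*} (x0 : Ω → ℝ) (eps : ℕ → Ω → ℝ) {k k' : ℕ} (h : k ≤ k') :
    sigmaUpTo x0 eps k ≤ sigmaUpTo x0 eps k' := by
  refine sup_le_sup_left ?_ _
  refine iSup₂_le fun j hj => ?_
  have hj' : j ∈ Finset.Icc 1 k' := by
    simp only [Finset.mem_Icc] at hj ⊢; omega
  exact le_iSup₂_of_le j hj' le_rfl

lemma eps_mem_sigmaUpTo {Ω : Type*} (x0 : Ω → ℝ) (eps : ℕ → Ω → ℝ) {j k : ℕ}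
    (h1 : 1 ≤ j) (h2 : j ≤ k) :
    @Measurable Ω ℝ (sigmaUpTo x0 eps k) _ (eps j) := by
  rw [measurable_iff_comap_le]
  have hj' : j ∈ Finset.Icc 1 k := by simp only [Finset.mem_Icc]; omega
  calc MeasurableSpace.comap (eps j) inferInstance
      ≤ ⨆ l ∈ Finset.Icc 1 k, MeasurableSpace.comap (eps l) inferInstance :=
        le_iSup₂_of_le j hj' le_rfl
    _ ≤ sigmaUpTo x0 eps k := le_sup_right

lemma indep_past_future {Ω : Type*} [MeasurableSpace Ω] {μ : Measure Ω}
    (N : ℕ) (x0 : Ω → ℝ) (eps : ℕ → Ω → ℝ)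
    (hx0m : Measurable x0) (hepsm : ∀ k, Measurable (eps k))
    (hindep : iIndepFun
      (fun k : Fin (N + 1) => if (k : ℕ) = 0 then x0 else eps k) μ)
    (k : ℕ) (hk : k < N) {β : Type*} [MeasurableSpace β] {g : Ω → β}
    (hg : @Measurable Ω β (sigmaUpTo x0 eps k) _ g) :
    IndepFun g (eps (k + 1)) μ := by
  set f : Fin (N+1) → Ω → ℝ := fun j => if (j : ℕ) = 0 then x0 else eps j with hf
  have hfm : ∀ j, Measurable (f j) := by
    intro j; by_cases h : (j : ℕ) = 0 <;> simp only [hf, h, if_true, if_false] <;>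
      [exact hx0m; exact hepsm _]
  set S : Finset (Fin (N+1)) := Finset.univ.filter (fun j => (j : ℕ) ≤ k) with hS
  set T : Finset (Fin (N+1)) := {(⟨k+1, by omega⟩ : Fin (N+1))} with hT
  have hST : Disjoint S T := by
    rw [Finset.disjoint_singleton_right, hS]
    simp
  have hIF := hindep.indepFun_finset S T hST hfm
  have hproj : ∀ (W : Finset (Fin (N+1))) (j) (hj : j ∈ W),
      MeasurableSpace.comap (f j) inferInstance
        ≤ MeasurableSpace.comap (fun ω (i : W) => f (i : Fin (N+1)) ω) MeasurableSpace.pi := by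
    intro W j hj
    have heq : f j = (fun v : W → ℝ => v ⟨j, hj⟩) ∘ (fun ω (i : W) => f (i : Fin (N+1)) ω) := rfl
    rw [heq, ← MeasurableSpace.comap_comp]
    exact MeasurableSpace.comap_mono (measurable_pi_apply (⟨j, hj⟩ : W)).comap_le
  have hle1 : sigmaUpTo x0 eps k
      ≤ MeasurableSpace.comap (fun ω (i : S) => f (i : Fin (N+1)) ω) MeasurableSpace.pi := by
    refine sup_le ?_ ?_
    · have h0 : (⟨0, by omega⟩ : Fin (N+1)) ∈ S := by simp [hS]
      have := hproj S _ h0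
      simpa only [hf, Fin.val_mk, if_pos rfl] using this
    · refine iSup₂_le fun j hj => ?_
      simp only [Finset.mem_Icc] at hj
      have hjlt : j < N + 1 := by omega
      have hjS : (⟨j, hjlt⟩ : Fin (N+1)) ∈ S := by simp [hS]; omega
      have := hproj S _ hjS
      have hfj : f ⟨j, hjlt⟩ = eps j := by
        simp only [hf, Fin.val_mk]
        rw [if_neg (by omega)]
      rwa [hfj] at this
  have hle2 : MeasurableSpace.comap (eps (k+1)) inferInstance
      ≤ MeasurableSpace.comap (fun ω (i : T) => f (i : Fin (N+1)) ω) MeasurableSpace.pi := by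
    have hT0 : (⟨k+1, by omega⟩ : Fin (N+1)) ∈ T := Finset.mem_singleton_self _
    have := hproj T _ hT0
    have hfj : f ⟨k+1, by omega⟩ = eps (k+1) := by
      simp only [hf, Fin.val_mk]
      rw [if_neg (by omega)]
    rwa [hfj] at this
  have hIndep : ProbabilityTheory.Indep (sigmaUpTo x0 eps k)
      (MeasurableSpace.comap (eps (k+1)) inferInstance) μ :=
    Kernel.indep_of_indep_of_le_right (Kernel.indep_of_indep_of_le_left hIF hle1) hle2
  exact Kernel.indep_of_indep_of_le_left hIndep (measurable_iff_comap_le.mp hg)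


lemma x0_meas_sigmaUpTo {Ω : Type*} (x0 : Ω → ℝ) (eps : ℕ → Ω → ℝ) (k : ℕ) :
    @Measurable Ω ℝ (sigmaUpTo x0 eps k) _ x0 := by
  rw [measurable_iff_comap_le]; exact le_sup_left

/-- One-step moment computation: if `X = M + A y + b v + y e` with centered square
integrable `y, v`, and `e` centered, square integrable and independent of `(y, v)`, then
`X ∈ L²`, `E[X] = M`, `var X = E[(Ay + bv)²] + E[y²]·E[e²]`. -/
lemma step_moments {Ω : Type*} [MeasurableSpace Ω] {μ : Measure Ω} [IsProbabilityMeasure μ]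
    {y v e X : Ω → ℝ} (M A bb : ℝ)
    (hy : MemLp y 2 μ) (hv : MemLp v 2 μ) (he : MemLp e 2 μ)
    (hym : ∫ ω, y ω ∂μ = 0) (hvm : ∫ ω, v ω ∂μ = 0) (hem : ∫ ω, e ω ∂μ = 0)
    (hind : IndepFun (fun ω => (y ω, v ω)) e μ)
    (hX : ∀ ω, X ω = M + A * y ω + bb * v ω + y ω * e ω) :
    MemLp X 2 μ ∧ (∫ ω, X ω ∂μ) = M ∧
      variance X μ = (∫ ω, (A * y ω + bb * v ω)^2 ∂μ)
        + (∫ ω, y ω^2 ∂μ) * (∫ ω, e ω^2 ∂μ) := by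
  have hy1 : Integrable y μ := hy.integrable one_le_two
  have hv1 : Integrable v μ := hv.integrable one_le_two
  have he1 : Integrable e μ := he.integrable one_le_two
  have hy2 : Integrable (fun ω => y ω ^ 2) μ := hy.integrable_sq
  have he2 : Integrable (fun ω => e ω ^ 2) μ := he.integrable_sq
  set w : Ω → ℝ := fun ω => A * y ω + bb * v ω with hw_def
  have hw : MemLp w 2 μ := (hy.const_mul A).add (hv.const_mul bb)
  have hw1 : Integrable w μ := hw.integrable one_le_two
  have hAy : Integrable (fun ω => A * y ω) μ := hy1.const_mul A
  have hbv : Integrable (fun ω => bb * v ω) μ := hv1.const_mul bb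
  have hwm : ∫ ω, w ω ∂μ = 0 := by
    rw [hw_def]
    rw [integral_add hAy hbv, integral_const_mul, integral_const_mul, hym, hvm]
    ring
  have hIye : IndepFun y e μ := by
    have := hind.comp (φ := fun q : ℝ × ℝ => q.1) (ψ := id) measurable_fst measurable_id
    exact this
  have hIy2e2 : IndepFun (fun ω => y ω ^ 2) (fun ω => e ω ^ 2) μ := by
    have := hIye.comp (φ := fun t : ℝ => t ^ 2) (ψ := fun t : ℝ => t ^ 2)
      (measurable_id.pow_const 2) (measurable_id.pow_const 2)
    exact this
  have hy2e2 : Integrable (fun ω => y ω ^ 2 * e ω ^ 2) μ := by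
    have := hIy2e2.integrable_mul hy2 he2
    exact this
  have hye : MemLp (fun ω => y ω * e ω) 2 μ := by
    refine (memLp_two_iff_integrable_sq
      (hy.aestronglyMeasurable.mul he.aestronglyMeasurable)).2 ?_
    simpa [mul_pow] using hy2e2
  have hye1 : Integrable (fun ω => y ω * e ω) μ := hye.integrable one_le_two
  have hyem : ∫ ω, y ω * e ω ∂μ = 0 := by
    rw [hIye.integral_fun_mul_eq_mul_integral hy.aestronglyMeasurable he.aestronglyMeasurable, hem, mul_zero]
  have hXeq : X = fun ω => (M + w ω) + y ω * e ω := by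
    funext ω; rw [hX ω, hw_def]; ring
  have hXL2 : MemLp X 2 μ := by
    rw [hXeq]
    exact ((memLp_const M).add hw).add hye
  have hMw : Integrable (fun ω => M + w ω) μ := (integrable_const M).add hw1
  have hXmean : (∫ ω, X ω ∂μ) = M := by
    rw [hXeq]
    rw [integral_add hMw hye1, integral_add (integrable_const M) hw1,
      integral_const, hwm, hyem]
    simp
  refine ⟨hXL2, hXmean, ?_⟩
  -- variance
  have hIwye : IndepFun (fun ω => w ω * y ω) e μ := by
    have := hind.comp (φ := fun q : ℝ × ℝ => (A * q.1 + bb * q.2) * q.1) (ψ := id)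
      (((measurable_fst.const_mul A).add (measurable_snd.const_mul bb)).mul measurable_fst)
      measurable_id
    exact this
  have hwy1 : Integrable (fun ω => w ω * y ω) μ := mul_L2_integrable hw hy
  have hwye1 : Integrable (fun ω => (w ω * y ω) * e ω) μ := by
    have := hIwye.integrable_mul hwy1 he1
    exact this
  have hwyem : ∫ ω, (w ω * y ω) * e ω ∂μ = 0 := by
    rw [hIwye.integral_fun_mul_eq_mul_integral hwy1.aestronglyMeasurable he.aestronglyMeasurable, hem, mul_zero]
  have hy2e2m : ∫ ω, y ω ^ 2 * e ω ^ 2 ∂μ = (∫ ω, y ω ^ 2 ∂μ) * (∫ ω, e ω ^ 2 ∂μ) := by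
    rw [hIy2e2.integral_fun_mul_eq_mul_integral hy2.aestronglyMeasurable he2.aestronglyMeasurable]
  have hw2 : Integrable (fun ω => w ω ^ 2) μ := hw.integrable_sq
  rw [variance_integral hXL2, hXmean]
  have hptw : ∀ ω, (X ω - M) ^ 2
      = w ω ^ 2 + (2 * (w ω * y ω) * e ω + y ω ^ 2 * e ω ^ 2) := by
    intro ω; rw [hX ω, hw_def]; ring
  calc ∫ ω, (X ω - M) ^ 2 ∂μ
      = ∫ ω, (w ω ^ 2 + (2 * (w ω * y ω) * e ω + y ω ^ 2 * e ω ^ 2)) ∂μ := by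
        exact integral_congr_ae (Filter.Eventually.of_forall hptw)
    _ = (∫ ω, w ω ^ 2 ∂μ) + ((∫ ω, 2 * (w ω * y ω) * e ω ∂μ) + ∫ ω, y ω ^ 2 * e ω ^ 2 ∂μ) := by
        have hg1 : Integrable (fun ω => 2 * (w ω * y ω) * e ω) μ := by
          have := hwye1.const_mul 2
          simpa [mul_assoc] using this
        have hg2 : Integrable (fun ω => 2 * (w ω * y ω) * e ω + y ω ^ 2 * e ω ^ 2) μ :=
          hg1.add hy2e2
        rw [integral_add hw2 hg2, integral_add hg1 hy2e2]
    _ = (∫ ω, w ω ^ 2 ∂μ) + (∫ ω, y ω ^ 2 ∂μ) * (∫ ω, e ω ^ 2 ∂μ) := by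
        have h2 : ∫ ω, 2 * (w ω * y ω) * e ω ∂μ = 0 := by
          have : (fun ω => 2 * (w ω * y ω) * e ω) = fun ω => 2 * ((w ω * y ω) * e ω) := by
            funext ω; ring
          rw [this, integral_const_mul, hwyem, mul_zero]
        rw [h2, hy2e2m, zero_add]
    _ = (∫ ω, (A * y ω + bb * v ω) ^ 2 ∂μ) + (∫ ω, y ω ^ 2 ∂μ) * (∫ ω, e ω ^ 2 ∂μ) := rfl


set_option maxHeartbeats 1000000 in
/-- Proposition 6 (variance-aware `2p`-order game under multiplicative
state-and-mean dependent noise `(x_k − x̄_k)·ε_{k+1}`): the feedback strategies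
`u*_{ik} = −(E_k⁻¹·c_k)_i·ā_k·(x_k − x̄_k) − (Ē_k⁻¹·c̄_k)_i·ā_k·x̄_k` form a Nash
equilibrium over adapted square-integrable strategies, and the equilibrium expected
cost of agent `i` equals `α_{i0}·var(x₀) + ᾱ_{i0}·(E[x₀])^(2p)`. -/
theorem multiplicative_noise_power_game_nash {Ω : Type*} [MeasurableSpace Ω]
    (μ : Measure Ω) [IsProbabilityMeasure μ]
    (N I p : ℕ) (hN : 1 ≤ N) (hI : 2 ≤ I) (hp : 1 ≤ p)
    (a : ℕ → ℝ) (b : Fin I → ℕ → ℝ)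
    (q qbar r rbar : Fin I → ℕ → ℝ) (qN qbarN : Fin I → ℝ)
    (hq : ∀ i k, k < N → 0 < q i k) (hqbar : ∀ i k, k < N → 0 < qbar i k)
    (hr : ∀ i k, k < N → 0 < r i k) (hrbar : ∀ i k, k < N → 0 < rbar i k)
    (hqN : ∀ i, 0 < qN i) (hqbarN : ∀ i, 0 < qbarN i)
    (x0 : Ω → ℝ) (hx0m : Measurable x0) (hx0L2 : MemLp x0 2 μ)
    (hx02p : Integrable (fun ω => x0 ω ^ (2 * p)) μ)
    (eps : ℕ → Ω → ℝ) (hepsm : ∀ k, Measurable (eps k))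
    (hepsL2 : ∀ k, 1 ≤ k → k ≤ N → MemLp (eps k) 2 μ)
    (hepsmean : ∀ k, 1 ≤ k → k ≤ N → ∫ ω, eps k ω ∂μ = 0)
    (hindep : iIndepFun
      (fun k : Fin (N + 1) => if (k : ℕ) = 0 then x0 else eps k) μ)
    (alphabar alpha kappa cbar c : Fin I → ℕ → ℝ)
    (Ebar E : ℕ → Matrix (Fin I) (Fin I) ℝ)
    (halphabarN : ∀ i, alphabar i N = qbarN i)
    (halphaN : ∀ i, alpha i N = qN i)
    (hkappa : ∀ i k, k < N →
      kappa i k ^ (2 * p - 1) = alphabar i (k + 1) * b i k / rbar i k)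
    (hcbar : ∀ i k, k < N → cbar i k = kappa i k / (1 + kappa i k * b i k))
    (hc : ∀ i k, k < N →
      c i k = alpha i (k + 1) * b i k / (r i k + alpha i (k + 1) * b i k ^ 2))
    (hEbard : ∀ k, k < N → ∀ i, Ebar k i i = 1)
    (hEbaro : ∀ k, k < N → ∀ i j, i ≠ j → Ebar k i j = cbar i k * b j k)
    (hEd : ∀ k, k < N → ∀ i, E k i i = 1)
    (hEo : ∀ k, k < N → ∀ i j, i ≠ j → E k i j = c i k * b j k)
    (hEbarinv : ∀ k, k < N → IsUnit (Ebar k))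
    (hEinv : ∀ k, k < N → IsUnit (E k))
    (hden1 : ∀ i k, k < N → 0 < 1 + kappa i k * b i k)
    (hden2 : ∀ i k, k < N → 0 < r i k + alpha i (k + 1) * b i k ^ 2)
    (halphabar : ∀ i k, k < N →
      alphabar i k = qbar i k
        + rbar i k * ((Ebar k)⁻¹.mulVec (fun l => cbar l k) i * a k) ^ (2 * p)
        + alphabar i (k + 1)
            * (a k - ∑ j, (Ebar k)⁻¹.mulVec (fun l => cbar l k) j * a k * b j k) ^ (2 * p))
    (halpha : ∀ i k, k < N →
      alpha i k = q i k + r i k * ((E k)⁻¹.mulVec (fun l => c l k) i * a k) ^ 2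
        + alpha i (k + 1)
            * (a k - ∑ j, (E k)⁻¹.mulVec (fun l => c l k) j * a k * b j k) ^ 2
        + alpha i (k + 1) * ∫ ω, eps (k + 1) ω ^ 2 ∂μ)
    (xstar : ℕ → Ω → ℝ) (hxstar0 : xstar 0 = x0)
    (hxstar : ∀ k, k < N → ∀ ω, xstar (k + 1) ω
      = a k * xstar k ω
        + ∑ j, b j k * mfFeedback (Ebar k) (E k) (fun l => cbar l k) (fun l => c l k)
            (a k) (∫ ω', xstar k ω' ∂μ) (xstar k ω) j
        + (xstar k ω - ∫ ω', xstar k ω' ∂μ) * eps (k + 1) ω) :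
    (∀ i : Fin I, ∀ u : ℕ → Ω → ℝ,
      (∀ k, k < N → MemLp (u k) 2 μ) →
      (∀ k, k < N → @Measurable Ω ℝ (sigmaUpTo x0 eps k) _ (u k)) →
      ∀ x : ℕ → Ω → ℝ, x 0 = x0 →
      (∀ k, k < N → ∀ ω, x (k + 1) ω
        = a k * x k ω + b i k * u k ω
          + ∑ j ∈ Finset.univ.erase i,
              b j k * mfFeedback (Ebar k) (E k) (fun l => cbar l k) (fun l => c l k)
                (a k) (∫ ω', x k ω' ∂μ) (x k ω) j
          + (x k ω - ∫ ω', x k ω' ∂μ) * eps (k + 1) ω) →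
      powerVarCost μ N p (qN i) (qbarN i) (q i) (qbar i) (r i) (rbar i) xstar
          (fun k ω => mfFeedback (Ebar k) (E k) (fun l => cbar l k) (fun l => c l k)
            (a k) (∫ ω', xstar k ω' ∂μ) (xstar k ω) i)
        ≤ powerVarCost μ N p (qN i) (qbarN i) (q i) (qbar i) (r i) (rbar i) x u) ∧
    (∀ i : Fin I,
      powerVarCost μ N p (qN i) (qbarN i) (q i) (qbar i) (r i) (rbar i) xstar
          (fun k ω => mfFeedback (Ebar k) (E k) (fun l => cbar l k) (fun l => c l k)
            (a k) (∫ ω', xstar k ω' ∂μ) (xstar k ω) i)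
        = alpha i 0 * variance x0 μ
            + alphabar i 0 * (∫ ω, x0 ω ∂μ) ^ (2 * p)) := by
  classical
  have hambient : ∀ k, sigmaUpTo x0 eps k ≤ ‹MeasurableSpace Ω› :=
    fun k => sigmaUpTo_le_ambient hx0m hepsm k
  have hEven : Even (2*p) := even_two_mul p
  have hOdd : Odd (2*p-1) := ⟨p-1, by omega⟩
  -- positivity of `alphabar`
  have habarpos : ∀ i0 : Fin I, ∀ k, k ≤ N → 0 < alphabar i0 k := by
    intro i0
    have H : ∀ d k, k + d = N → 0 < alphabar i0 k := by
      intro d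
      induction d with
      | zero =>
        intro k hk
        have hkN : k = N := by omega
        rw [hkN, halphabarN]; exact hqbarN i0
      | succ d ih =>
        intro k hk
        have hkN : k < N := by omega
        have h1 := ih (k+1) (by omega)
        rw [halphabar i0 k hkN]
        have h2 : (0:ℝ) ≤ rbar i0 k
            * ((Ebar k)⁻¹.mulVec (fun l => cbar l k) i0 * a k) ^ (2*p) :=
          mul_nonneg (hrbar i0 k hkN).le (hEven.pow_nonneg _)
        have h3 : (0:ℝ) ≤ alphabar i0 (k+1)
            * (a k - ∑ j, (Ebar k)⁻¹.mulVec (fun l => cbar l k) j * a k * b j k) ^ (2*p) :=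
          mul_nonneg h1.le (hEven.pow_nonneg _)
        have := hqbar i0 k hkN
        linarith
    intro k hk; exact H (N-k) k (by omega)
  -- matrix row identities
  have hrowE : ∀ (i0 : Fin I) (k : ℕ), k < N →
      (E k)⁻¹.mulVec (fun l => c l k) i0
        + c i0 k * (∑ j ∈ Finset.univ.erase i0, b j k * (E k)⁻¹.mulVec (fun l => c l k) j)
        = c i0 k := by
    intro i0 k hk
    have hu : IsUnit (E k).det := (Matrix.isUnit_iff_isUnit_det _).mp (hEinv k hk)
    have h1 : (E k).mulVec ((E k)⁻¹.mulVec (fun l => c l k)) = (fun l => c l k) := by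
      rw [Matrix.mulVec_mulVec, Matrix.mul_nonsing_inv _ hu, Matrix.one_mulVec]
    have h2 : ∑ j, E k i0 j * (E k)⁻¹.mulVec (fun l => c l k) j = c i0 k := by
      have := congrFun h1 i0
      simpa [Matrix.mulVec, dotProduct] using this
    rw [← Finset.add_sum_erase _ _ (Finset.mem_univ i0), hEd k hk i0, one_mul] at h2
    have h3 : ∑ j ∈ Finset.univ.erase i0, E k i0 j * (E k)⁻¹.mulVec (fun l => c l k) j
        = c i0 k * ∑ j ∈ Finset.univ.erase i0, b j k * (E k)⁻¹.mulVec (fun l => c l k) j := by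
      rw [Finset.mul_sum]
      refine Finset.sum_congr rfl fun j hj => ?_
      rw [hEo k hk i0 j (Ne.symm (Finset.ne_of_mem_erase hj))]
      ring
    rw [h3] at h2
    exact h2
  have hrowEb : ∀ (i0 : Fin I) (k : ℕ), k < N →
      (Ebar k)⁻¹.mulVec (fun l => cbar l k) i0
        + cbar i0 k * (∑ j ∈ Finset.univ.erase i0, b j k * (Ebar k)⁻¹.mulVec (fun l => cbar l k) j)
        = cbar i0 k := by
    intro i0 k hk
    have hu : IsUnit (Ebar k).det := (Matrix.isUnit_iff_isUnit_det _).mp (hEbarinv k hk)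
    have h1 : (Ebar k).mulVec ((Ebar k)⁻¹.mulVec (fun l => cbar l k)) = (fun l => cbar l k) := by
      rw [Matrix.mulVec_mulVec, Matrix.mul_nonsing_inv _ hu, Matrix.one_mulVec]
    have h2 : ∑ j, Ebar k i0 j * (Ebar k)⁻¹.mulVec (fun l => cbar l k) j = cbar i0 k := by
      have := congrFun h1 i0
      simpa [Matrix.mulVec, dotProduct] using this
    rw [← Finset.add_sum_erase _ _ (Finset.mem_univ i0), hEbard k hk i0, one_mul] at h2
    have h3 : ∑ j ∈ Finset.univ.erase i0, Ebar k i0 j * (Ebar k)⁻¹.mulVec (fun l => cbar l k) j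
        = cbar i0 k * ∑ j ∈ Finset.univ.erase i0, b j k * (Ebar k)⁻¹.mulVec (fun l => cbar l k) j := by
      rw [Finset.mul_sum]
      refine Finset.sum_congr rfl fun j hj => ?_
      rw [hEbaro k hk i0 j (Ne.symm (Finset.ne_of_mem_erase hj))]
      ring
    rw [h3] at h2
    exact h2
  have hcmul : ∀ (i0 : Fin I) (k : ℕ), k < N →
      c i0 k * (r i0 k + alpha i0 (k+1) * b i0 k ^ 2) = alpha i0 (k+1) * b i0 k := by
    intro i0 k hk
    rw [hc i0 k hk, div_mul_cancel₀ _ (hden2 i0 k hk).ne']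
  have hcbmul : ∀ (i0 : Fin I) (k : ℕ), k < N →
      cbar i0 k * (1 + kappa i0 k * b i0 k) = kappa i0 k := by
    intro i0 k hk
    rw [hcbar i0 k hk, div_mul_cancel₀ _ (hden1 i0 k hk).ne']
  have hfullE : ∀ (i0 : Fin I) (k : ℕ),
      (∑ j, (E k)⁻¹.mulVec (fun l => c l k) j * a k * b j k)
        = a k * (∑ j ∈ Finset.univ.erase i0, b j k * (E k)⁻¹.mulVec (fun l => c l k) j)
          + (E k)⁻¹.mulVec (fun l => c l k) i0 * a k * b i0 k := by
    intro i0 k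
    rw [← Finset.sum_erase_add _ _ (Finset.mem_univ i0), Finset.mul_sum]
    congr 1
    exact Finset.sum_congr rfl fun j _ => by ring
  have hfullEb : ∀ (i0 : Fin I) (k : ℕ),
      (∑ j, (Ebar k)⁻¹.mulVec (fun l => cbar l k) j * a k * b j k)
        = a k * (∑ j ∈ Finset.univ.erase i0, b j k * (Ebar k)⁻¹.mulVec (fun l => cbar l k) j)
          + (Ebar k)⁻¹.mulVec (fun l => cbar l k) i0 * a k * b i0 k := by
    intro i0 k
    rw [← Finset.sum_erase_add _ _ (Finset.mem_univ i0), Finset.mul_sum]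
    congr 1
    exact Finset.sum_congr rfl fun j _ => by ring
  have hrstat : ∀ (i0 : Fin I) (k : ℕ), k < N →
      r i0 k * ((E k)⁻¹.mulVec (fun l => c l k) i0 * a k)
        = alpha i0 (k+1) * b i0 k
          * (a k - ∑ j, (E k)⁻¹.mulVec (fun l => c l k) j * a k * b j k) := by
    intro i0 k hk
    have hrow := hrowE i0 k hk
    have hcm := hcmul i0 k hk
    have hfull := hfullE i0 k
    linear_combination (r i0 k * a k + alpha i0 (k+1) * a k * b i0 k ^ 2) * hrow
      + (a k - a k * (∑ j ∈ Finset.univ.erase i0,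
          b j k * (E k)⁻¹.mulVec (fun l => c l k) j)) * hcm
      + (alpha i0 (k+1) * b i0 k) * hfull
  have hkD : ∀ (i0 : Fin I) (k : ℕ), k < N →
      (Ebar k)⁻¹.mulVec (fun l => cbar l k) i0 * a k
        = kappa i0 k * (a k - ∑ j, (Ebar k)⁻¹.mulVec (fun l => cbar l k) j * a k * b j k) := by
    intro i0 k hk
    have hrow := hrowEb i0 k hk
    have hcm := hcbmul i0 k hk
    have hfull := hfullEb i0 k
    linear_combination (a k * (1 + kappa i0 k * b i0 k)) * hrow
      + (a k * (1 - (∑ j ∈ Finset.univ.erase i0,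
          b j k * (Ebar k)⁻¹.mulVec (fun l => cbar l k) j))) * hcm
      + kappa i0 k * hfull
  have hkstat : ∀ (i0 : Fin I) (k : ℕ), k < N →
      rbar i0 k * ((Ebar k)⁻¹.mulVec (fun l => cbar l k) i0 * a k) ^ (2*p-1)
        = alphabar i0 (k+1) * b i0 k
          * (a k - ∑ j, (Ebar k)⁻¹.mulVec (fun l => cbar l k) j * a k * b j k) ^ (2*p-1) := by
    intro i0 k hk
    rw [hkD i0 k hk, mul_pow, hkappa i0 k hk]
    have hr0 : rbar i0 k ≠ 0 := (hrbar i0 k hk).ne'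
    field_simp
  -- core one-step computation for the dynamics of a deviating agent `i0`
  have hcore : ∀ (i0 : Fin I) (k : ℕ), k < N →
      ∀ z : Ω → ℝ, MemLp z 2 μ → @Measurable Ω ℝ (sigmaUpTo x0 eps k) _ z →
      ∀ w : Ω → ℝ, MemLp w 2 μ → @Measurable Ω ℝ (sigmaUpTo x0 eps k) _ w →
      ∀ Z : Ω → ℝ,
      (∀ ω, Z ω = a k * z ω + b i0 k * w ω
        + ∑ j ∈ Finset.univ.erase i0,
            b j k * mfFeedback (Ebar k) (E k) (fun l => cbar l k) (fun l => c l k)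
              (a k) (∫ ω', z ω' ∂μ) (z ω) j
        + (z ω - ∫ ω', z ω' ∂μ) * eps (k+1) ω) →
      (MemLp Z 2 μ ∧ @Measurable Ω ℝ (sigmaUpTo x0 eps (k+1)) _ Z) ∧
      (∫ ω, Z ω ∂μ)
          = (a k - ∑ j ∈ Finset.univ.erase i0,
              (Ebar k)⁻¹.mulVec (fun l => cbar l k) j * a k * b j k) * (∫ ω, z ω ∂μ)
            + b i0 k * (∫ ω, w ω ∂μ) ∧
      variance Z μ
          = (∫ ω, ((a k - ∑ j ∈ Finset.univ.erase i0,
                (E k)⁻¹.mulVec (fun l => c l k) j * a k * b j k)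
                  * (z ω - ∫ ω', z ω' ∂μ)
                + b i0 k * (w ω - ∫ ω', w ω' ∂μ)) ^ 2 ∂μ)
            + variance z μ * (∫ ω, eps (k+1) ω ^ 2 ∂μ) := by
    intro i0 k hk z hz2 hzm w hw2 hwm Z hZdyn
    have hzme : @Measurable Ω ℝ inferInstance _ z := hzm.mono (hambient k) le_rfl
    have hwme : @Measurable Ω ℝ inferInstance _ w := hwm.mono (hambient k) le_rfl
    set mz : ℝ := ∫ ω, z ω ∂μ with hmz
    set mw : ℝ := ∫ ω, w ω ∂μ with hmw
    set Ae : ℝ := a k - ∑ j ∈ Finset.univ.erase i0,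
      (E k)⁻¹.mulVec (fun l => c l k) j * a k * b j k with hAe
    set Be : ℝ := a k - ∑ j ∈ Finset.univ.erase i0,
      (Ebar k)⁻¹.mulVec (fun l => cbar l k) j * a k * b j k with hBe
    -- collapse the feedback sum and normalize the dynamics
    have hnorm : ∀ ω, Z ω = (Be * mz + b i0 k * mw)
        + Ae * (z ω - mz) + b i0 k * (w ω - mw) + (z ω - mz) * eps (k+1) ω := by
      intro ω
      rw [hZdyn ω]
      have hsum : ∑ j ∈ Finset.univ.erase i0,
          b j k * mfFeedback (Ebar k) (E k) (fun l => cbar l k) (fun l => c l k)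
            (a k) mz (z ω) j
          = -(∑ j ∈ Finset.univ.erase i0,
                (Ebar k)⁻¹.mulVec (fun l => cbar l k) j * a k * b j k) * mz
            - (∑ j ∈ Finset.univ.erase i0,
                (E k)⁻¹.mulVec (fun l => c l k) j * a k * b j k) * (z ω - mz) := by
        calc ∑ j ∈ Finset.univ.erase i0,
              b j k * mfFeedback (Ebar k) (E k) (fun l => cbar l k) (fun l => c l k)
                (a k) mz (z ω) j
            = ∑ j ∈ Finset.univ.erase i0,
                ((-((Ebar k)⁻¹.mulVec (fun l => cbar l k) j * a k * b j k)) * mz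
                  + (-((E k)⁻¹.mulVec (fun l => c l k) j * a k * b j k)) * (z ω - mz)) := by
              refine Finset.sum_congr rfl fun j hj => ?_
              simp only [mfFeedback]
              ring
          _ = (∑ j ∈ Finset.univ.erase i0,
                (-((Ebar k)⁻¹.mulVec (fun l => cbar l k) j * a k * b j k))) * mz
              + (∑ j ∈ Finset.univ.erase i0,
                (-((E k)⁻¹.mulVec (fun l => c l k) j * a k * b j k))) * (z ω - mz) := by
              rw [Finset.sum_add_distrib, Finset.sum_mul, Finset.sum_mul]
          _ = -(∑ j ∈ Finset.univ.erase i0,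
                (Ebar k)⁻¹.mulVec (fun l => cbar l k) j * a k * b j k) * mz
              - (∑ j ∈ Finset.univ.erase i0,
                (E k)⁻¹.mulVec (fun l => c l k) j * a k * b j k) * (z ω - mz) := by
              rw [Finset.sum_neg_distrib, Finset.sum_neg_distrib]
              ring
      rw [hsum, hAe, hBe]
      ring
    -- apply the moment lemma
    have hy2 : MemLp (fun ω => z ω - mz) 2 μ := hz2.sub (memLp_const mz)
    have hv2 : MemLp (fun ω => w ω - mw) 2 μ := hw2.sub (memLp_const mw)
    have he2 : MemLp (eps (k+1)) 2 μ := hepsL2 (k+1) (by omega) (by omega)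
    have hym : ∫ ω, (z ω - mz) ∂μ = 0 := by
      rw [integral_sub (hz2.integrable one_le_two) (integrable_const mz), integral_const]
      simp [hmz]
    have hvm : ∫ ω, (w ω - mw) ∂μ = 0 := by
      rw [integral_sub (hw2.integrable one_le_two) (integrable_const mw), integral_const]
      simp [hmw]
    have hem : ∫ ω, eps (k+1) ω ∂μ = 0 := hepsmean (k+1) (by omega) (by omega)
    have hpairm : @Measurable Ω (ℝ × ℝ) (sigmaUpTo x0 eps k) _
        (fun ω => (z ω - mz, w ω - mw)) :=
      Measurable.prodMk (hzm.sub measurable_const) (hwm.sub measurable_const)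
    have hind : IndepFun (fun ω => (z ω - mz, w ω - mw)) (eps (k+1)) μ :=
      indep_past_future N x0 eps hx0m hepsm hindep k hk hpairm
    obtain ⟨hZ2, hZmean, hZvar⟩ := step_moments (μ := μ)
      (y := fun ω => z ω - mz) (v := fun ω => w ω - mw) (e := eps (k+1)) (X := Z)
      (Be * mz + b i0 k * mw) Ae (b i0 k) hy2 hv2 he2 hym hvm hem hind hnorm
    refine ⟨⟨hZ2, ?_⟩, hZmean, ?_⟩
    · -- measurability of Z w.r.t. `sigmaUpTo (k+1)`
      have hZfun : Z = fun ω => (Be * mz + b i0 k * mw)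
          + Ae * (z ω - mz) + b i0 k * (w ω - mw) + (z ω - mz) * eps (k+1) ω :=
        funext hnorm
      rw [hZfun]
      have hz' : @Measurable Ω ℝ (sigmaUpTo x0 eps (k+1)) _ z :=
        hzm.mono (sigmaUpTo_mono x0 eps (Nat.le_succ k)) le_rfl
      have hw' : @Measurable Ω ℝ (sigmaUpTo x0 eps (k+1)) _ w :=
        hwm.mono (sigmaUpTo_mono x0 eps (Nat.le_succ k)) le_rfl
      have he' : @Measurable Ω ℝ (sigmaUpTo x0 eps (k+1)) _ (eps (k+1)) :=
        eps_mem_sigmaUpTo x0 eps (by omega) (le_refl (k+1))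
      exact ((measurable_const.add (((hz'.sub measurable_const).const_mul Ae))).add
        ((hw'.sub measurable_const).const_mul (b i0 k))).add
        ((hz'.sub measurable_const).mul he')
    · -- variance identity
      rw [hZvar]
      congr 1
      have : ∫ ω, (z ω - mz) ^ 2 ∂μ = variance z μ := (variance_integral hz2).symm
      rw [this]
  -- feedback control regularity
  have hfb : ∀ (i0 : Fin I) (k : ℕ), MemLp (xstar k) 2 μ →
      @Measurable Ω ℝ (sigmaUpTo x0 eps k) _ (xstar k) →
      MemLp (fun ω => mfFeedback (Ebar k) (E k) (fun l => cbar l k) (fun l => c l k)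
          (a k) (∫ ω', xstar k ω' ∂μ) (xstar k ω) i0) 2 μ
        ∧ @Measurable Ω ℝ (sigmaUpTo x0 eps k) _
            (fun ω => mfFeedback (Ebar k) (E k) (fun l => cbar l k) (fun l => c l k)
              (a k) (∫ ω', xstar k ω' ∂μ) (xstar k ω) i0) := by
    intro i0 k hx2 hxm
    simp only [mfFeedback]
    constructor
    · exact (memLp_const _).sub
        ((hx2.sub (memLp_const _)).const_mul ((E k)⁻¹.mulVec (fun l => c l k) i0 * a k))
    · exact measurable_const.sub ((hxm.sub measurable_const).const_mul _)
  -- regularity of the equilibrium trajectory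
  have idx0 : Fin I := ⟨0, by omega⟩
  have hdynstar : ∀ (i0 : Fin I) (k : ℕ), k < N → ∀ ω, xstar (k+1) ω
      = a k * xstar k ω
        + b i0 k * (fun ω' => mfFeedback (Ebar k) (E k) (fun l => cbar l k) (fun l => c l k)
            (a k) (∫ ω'', xstar k ω'' ∂μ) (xstar k ω') i0) ω
        + ∑ j ∈ Finset.univ.erase i0,
            b j k * mfFeedback (Ebar k) (E k) (fun l => cbar l k) (fun l => c l k)
              (a k) (∫ ω', xstar k ω' ∂μ) (xstar k ω) j
        + (xstar k ω - ∫ ω', xstar k ω' ∂μ) * eps (k+1) ω := by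
    intro i0 k hk ω
    rw [hxstar k hk ω,
      ← Finset.add_sum_erase _ (fun j => b j k * mfFeedback (Ebar k) (E k)
        (fun l => cbar l k) (fun l => c l k) (a k) (∫ ω', xstar k ω' ∂μ) (xstar k ω) j)
        (Finset.mem_univ i0)]
    ring
  have hxstarreg : ∀ k, k ≤ N →
      MemLp (xstar k) 2 μ ∧ @Measurable Ω ℝ (sigmaUpTo x0 eps k) _ (xstar k) := by
    intro k
    induction k with
    | zero =>
      intro _
      rw [hxstar0]
      exact ⟨hx0L2, x0_meas_sigmaUpTo x0 eps 0⟩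
    | succ k ih =>
      intro hk1
      have hk : k < N := by omega
      obtain ⟨hx2, hxm⟩ := ih (by omega)
      obtain ⟨hw2, hwm⟩ := hfb idx0 k hx2 hxm
      exact (hcore idx0 k hk (xstar k) hx2 hxm _ hw2 hwm (xstar (k+1))
        (hdynstar idx0 k hk)).1
  -- per-step equality along the equilibrium trajectory
  have hstepEq : ∀ (i0 : Fin I) (k : ℕ), k < N →
      q i0 k * variance (xstar k) μ + qbar i0 k * (∫ ω, xstar k ω ∂μ) ^ (2*p)
        + r i0 k * variance (fun ω => mfFeedback (Ebar k) (E k) (fun l => cbar l k)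
            (fun l => c l k) (a k) (∫ ω', xstar k ω' ∂μ) (xstar k ω) i0) μ
        + rbar i0 k * (∫ ω, mfFeedback (Ebar k) (E k) (fun l => cbar l k)
            (fun l => c l k) (a k) (∫ ω', xstar k ω' ∂μ) (xstar k ω) i0 ∂μ) ^ (2*p)
        + (alpha i0 (k+1) * variance (xstar (k+1)) μ
            + alphabar i0 (k+1) * (∫ ω, xstar (k+1) ω ∂μ) ^ (2*p))
      = alpha i0 k * variance (xstar k) μ
          + alphabar i0 k * (∫ ω, xstar k ω ∂μ) ^ (2*p) := by
    intro i0 k hk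
    obtain ⟨hx2, hxm⟩ := hxstarreg k (le_of_lt hk)
    obtain ⟨hw2, hwm⟩ := hfb i0 k hx2 hxm
    obtain ⟨-, hmean, hvar⟩ := hcore i0 k hk (xstar k) hx2 hxm _ hw2 hwm (xstar (k+1))
      (hdynstar i0 k hk)
    have hy0 : ∫ ω, (xstar k ω - ∫ ω', xstar k ω' ∂μ) ∂μ = 0 := by
      rw [integral_sub (hx2.integrable one_le_two) (integrable_const _), integral_const]
      simp
    have hyint : Integrable (fun ω => xstar k ω - ∫ ω', xstar k ω' ∂μ) μ :=
      (hx2.integrable one_le_two).sub (integrable_const _)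
    -- mean of the feedback control
    have hwmean : (∫ ω, mfFeedback (Ebar k) (E k) (fun l => cbar l k) (fun l => c l k)
        (a k) (∫ ω', xstar k ω' ∂μ) (xstar k ω) i0 ∂μ)
        = -((Ebar k)⁻¹.mulVec (fun l => cbar l k) i0 * a k) * (∫ ω, xstar k ω ∂μ) := by
      simp only [mfFeedback]
      rw [integral_sub (integrable_const _) ((hyint.const_mul _))]
      rw [integral_const, integral_const_mul, hy0]
      simp
    -- variance of the feedback control
    have hwvar : variance (fun ω => mfFeedback (Ebar k) (E k) (fun l => cbar l k)
        (fun l => c l k) (a k) (∫ ω', xstar k ω' ∂μ) (xstar k ω) i0) μ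
        = ((E k)⁻¹.mulVec (fun l => c l k) i0 * a k) ^ 2 * variance (xstar k) μ := by
      rw [variance_integral hw2, hwmean]
      have hptw : ∀ ω, (mfFeedback (Ebar k) (E k) (fun l => cbar l k) (fun l => c l k)
          (a k) (∫ ω', xstar k ω' ∂μ) (xstar k ω) i0
            - -((Ebar k)⁻¹.mulVec (fun l => cbar l k) i0 * a k) * (∫ ω, xstar k ω ∂μ)) ^ 2
          = ((E k)⁻¹.mulVec (fun l => c l k) i0 * a k) ^ 2
            * (xstar k ω - ∫ ω', xstar k ω' ∂μ) ^ 2 := by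
        intro ω; simp only [mfFeedback]; ring
      rw [integral_congr_ae (Filter.Eventually.of_forall hptw), integral_const_mul,
        ← variance_integral hx2]
    -- coefficient identities
    have hsplit : (∑ j ∈ Finset.univ.erase i0, (E k)⁻¹.mulVec (fun l => c l k) j * a k * b j k)
          + (E k)⁻¹.mulVec (fun l => c l k) i0 * a k * b i0 k
        = ∑ j, (E k)⁻¹.mulVec (fun l => c l k) j * a k * b j k :=
      Finset.sum_erase_add _ _ (Finset.mem_univ i0)
    have hsplitb : (∑ j ∈ Finset.univ.erase i0, (Ebar k)⁻¹.mulVec (fun l => cbar l k) j * a k * b j k)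
          + (Ebar k)⁻¹.mulVec (fun l => cbar l k) i0 * a k * b i0 k
        = ∑ j, (Ebar k)⁻¹.mulVec (fun l => cbar l k) j * a k * b j k :=
      Finset.sum_erase_add _ _ (Finset.mem_univ i0)
    -- mean of the next state
    have hmean' : (∫ ω, xstar (k+1) ω ∂μ)
        = (a k - ∑ j, (Ebar k)⁻¹.mulVec (fun l => cbar l k) j * a k * b j k)
          * (∫ ω, xstar k ω ∂μ) := by
      rw [hmean, hwmean]
      linear_combination (-(∫ ω, xstar k ω ∂μ)) * hsplitb
    -- variance of the next state
    have hvar' : variance (xstar (k+1)) μ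
        = (a k - ∑ j, (E k)⁻¹.mulVec (fun l => c l k) j * a k * b j k) ^ 2
            * variance (xstar k) μ
          + variance (xstar k) μ * (∫ ω, eps (k+1) ω ^ 2 ∂μ) := by
      rw [hvar]
      congr 1
      have hAeD : a k - (∑ j ∈ Finset.univ.erase i0,
            (E k)⁻¹.mulVec (fun l => c l k) j * a k * b j k)
          - b i0 k * ((E k)⁻¹.mulVec (fun l => c l k) i0 * a k)
          = a k - ∑ j, (E k)⁻¹.mulVec (fun l => c l k) j * a k * b j k := by
        linear_combination - hsplit
      have hptw2 : ∀ ω, ((a k - ∑ j ∈ Finset.univ.erase i0,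
            (E k)⁻¹.mulVec (fun l => c l k) j * a k * b j k)
              * (xstar k ω - ∫ ω', xstar k ω' ∂μ)
            + b i0 k * (mfFeedback (Ebar k) (E k) (fun l => cbar l k) (fun l => c l k)
                (a k) (∫ ω', xstar k ω' ∂μ) (xstar k ω) i0
              - ∫ ω', mfFeedback (Ebar k) (E k) (fun l => cbar l k) (fun l => c l k)
                  (a k) (∫ ω'', xstar k ω'' ∂μ) (xstar k ω') i0 ∂μ)) ^ 2
          = (a k - ∑ j, (E k)⁻¹.mulVec (fun l => c l k) j * a k * b j k) ^ 2
            * (xstar k ω - ∫ ω', xstar k ω' ∂μ) ^ 2 := by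
        intro ω
        rw [hwmean, ← hAeD]
        simp only [mfFeedback]
        ring
      rw [integral_congr_ae (Filter.Eventually.of_forall hptw2), integral_const_mul,
        ← variance_integral hx2]
    have e1 : (-((Ebar k)⁻¹.mulVec (fun l => cbar l k) i0 * a k) * (∫ ω, xstar k ω ∂μ)) ^ (2*p)
        = ((Ebar k)⁻¹.mulVec (fun l => cbar l k) i0 * a k) ^ (2*p)
          * (∫ ω, xstar k ω ∂μ) ^ (2*p) := by
      rw [neg_mul, hEven.neg_pow, mul_pow]
    have e2 : ((a k - ∑ j, (Ebar k)⁻¹.mulVec (fun l => cbar l k) j * a k * b j k)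
          * (∫ ω, xstar k ω ∂μ)) ^ (2*p)
        = (a k - ∑ j, (Ebar k)⁻¹.mulVec (fun l => cbar l k) j * a k * b j k) ^ (2*p)
          * (∫ ω, xstar k ω ∂μ) ^ (2*p) := mul_pow _ _ _
    rw [hwvar, hwmean, hmean', hvar', halpha i0 k hk, halphabar i0 k hk, e1, e2]
    ring
  -- tail equality along the equilibrium trajectory
  have keyEq : ∀ (i0 : Fin I) (d k : ℕ), k + d = N →
      qN i0 * variance (xstar N) μ + qbarN i0 * (∫ ω, xstar N ω ∂μ) ^ (2*p)
        + ∑ j ∈ Finset.Ico k N,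
            (q i0 j * variance (xstar j) μ + qbar i0 j * (∫ ω, xstar j ω ∂μ) ^ (2*p)
              + r i0 j * variance (fun ω => mfFeedback (Ebar j) (E j) (fun l => cbar l j)
                  (fun l => c l j) (a j) (∫ ω', xstar j ω' ∂μ) (xstar j ω) i0) μ
              + rbar i0 j * (∫ ω, mfFeedback (Ebar j) (E j) (fun l => cbar l j)
                  (fun l => c l j) (a j) (∫ ω', xstar j ω' ∂μ) (xstar j ω) i0 ∂μ) ^ (2*p))
      = alpha i0 k * variance (xstar k) μ + alphabar i0 k * (∫ ω, xstar k ω ∂μ) ^ (2*p) := by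
    intro i0 d
    induction d with
    | zero =>
      intro k hk
      have hkN : k = N := by omega
      subst hkN
      rw [Finset.Ico_self, Finset.sum_empty, halphaN, halphabarN]
      ring
    | succ d ih =>
      intro k hk
      have hkN : k < N := by omega
      rw [Finset.sum_eq_sum_Ico_succ_bot hkN]
      have h1 := ih (k+1) (by omega)
      have h2 := hstepEq i0 k hkN
      linarith
  have heqpart : ∀ i : Fin I,
      powerVarCost μ N p (qN i) (qbarN i) (q i) (qbar i) (r i) (rbar i) xstar
          (fun k ω => mfFeedback (Ebar k) (E k) (fun l => cbar l k) (fun l => c l k)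
            (a k) (∫ ω', xstar k ω' ∂μ) (xstar k ω) i)
        = alpha i 0 * variance x0 μ
            + alphabar i 0 * (∫ ω, x0 ω ∂μ) ^ (2 * p) := by
    intro i0
    have h0 := keyEq i0 N 0 (by omega)
    rw [hxstar0] at h0
    simp only [powerVarCost, Finset.range_eq_Ico]
    linarith
  refine ⟨?_, heqpart⟩
  -- Part 1 : any admissible deviation of agent i is not profitable
  intro i u hu2 huad x hx00 hdyn
  have hxreg : ∀ k, k ≤ N →
      MemLp (x k) 2 μ ∧ @Measurable Ω ℝ (sigmaUpTo x0 eps k) _ (x k) := by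
    intro k
    induction k with
    | zero =>
      intro _
      rw [hx00]
      exact ⟨hx0L2, x0_meas_sigmaUpTo x0 eps 0⟩
    | succ k ih =>
      intro hk1
      have hk : k < N := by omega
      obtain ⟨hx2, hxm⟩ := ih (by omega)
      exact (hcore i k hk (x k) hx2 hxm (u k) (hu2 k hk) (huad k hk) (x (k+1))
        (hdyn k hk)).1
  -- per-step inequality
  have hstepLe : ∀ k, k < N →
      alpha i k * variance (x k) μ + alphabar i k * (∫ ω, x k ω ∂μ) ^ (2*p)
      ≤ q i k * variance (x k) μ + qbar i k * (∫ ω, x k ω ∂μ) ^ (2*p)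
          + r i k * variance (u k) μ + rbar i k * (∫ ω, u k ω ∂μ) ^ (2*p)
        + (alpha i (k+1) * variance (x (k+1)) μ
            + alphabar i (k+1) * (∫ ω, x (k+1) ω ∂μ) ^ (2*p)) := by
    intro k hk
    obtain ⟨hx2, hxm⟩ := hxreg k (le_of_lt hk)
    have hu2k := hu2 k hk
    obtain ⟨-, hmean, hvar⟩ := hcore i k hk (x k) hx2 hxm (u k) hu2k (huad k hk)
      (x (k+1)) (hdyn k hk)
    set m : ℝ := ∫ ω, x k ω ∂μ with hm
    set mu : ℝ := ∫ ω, u k ω ∂μ with hmu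
    set V : ℝ := variance (x k) μ with hV
    set Vu : ℝ := variance (u k) μ with hVu0
    set sig : ℝ := ∫ ω, eps (k+1) ω ^ 2 ∂μ with hsig
    set gg : ℝ := (E k)⁻¹.mulVec (fun l => c l k) i * a k with hgg
    set DD : ℝ := a k - ∑ j, (E k)⁻¹.mulVec (fun l => c l k) j * a k * b j k with hDD
    set ggb : ℝ := (Ebar k)⁻¹.mulVec (fun l => cbar l k) i * a k with hggb
    set DDb : ℝ := a k - ∑ j, (Ebar k)⁻¹.mulVec (fun l => cbar l k) j * a k * b j k with hDDb
    have hsplit : (∑ j ∈ Finset.univ.erase i, (E k)⁻¹.mulVec (fun l => c l k) j * a k * b j k)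
          + (E k)⁻¹.mulVec (fun l => c l k) i * a k * b i k
        = ∑ j, (E k)⁻¹.mulVec (fun l => c l k) j * a k * b j k :=
      Finset.sum_erase_add _ _ (Finset.mem_univ i)
    have hsplitb : (∑ j ∈ Finset.univ.erase i, (Ebar k)⁻¹.mulVec (fun l => cbar l k) j * a k * b j k)
          + (Ebar k)⁻¹.mulVec (fun l => cbar l k) i * a k * b i k
        = ∑ j, (Ebar k)⁻¹.mulVec (fun l => cbar l k) j * a k * b j k :=
      Finset.sum_erase_add _ _ (Finset.mem_univ i)
    have hAeD : a k - (∑ j ∈ Finset.univ.erase i, (E k)⁻¹.mulVec (fun l => c l k) j * a k * b j k)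
        = DD + gg * b i k := by
      rw [hDD, hgg]
      linear_combination (-1 : ℝ) * hsplit
    have hBeD : a k - (∑ j ∈ Finset.univ.erase i, (Ebar k)⁻¹.mulVec (fun l => cbar l k) j * a k * b j k)
        = DDb + ggb * b i k := by
      rw [hDDb, hggb]
      linear_combination (-1 : ℝ) * hsplitb
    rw [hAeD] at hvar
    rw [hBeD] at hmean
    -- L² facts
    have hy2 : MemLp (fun ω => x k ω - m) 2 μ := hx2.sub (memLp_const m)
    have hv2 : MemLp (fun ω => u k ω - mu) 2 μ := hu2k.sub (memLp_const mu)
    have hVary : ∫ ω, (x k ω - m) ^ 2 ∂μ = V := (variance_integral hx2).symm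
    have hVaru : Vu = ∫ ω, (u k ω - mu) ^ 2 ∂μ := variance_integral hu2k
    -- pointwise quadratic identity
    have hstat := hrstat i k hk
    have hquad : ∀ ω, r i k * (u k ω - mu) ^ 2
          + alpha i (k+1) * ((DD + gg * b i k) * (x k ω - m) + b i k * (u k ω - mu)) ^ 2
        = (r i k * gg ^ 2 + alpha i (k+1) * DD ^ 2) * (x k ω - m) ^ 2
          + (r i k + alpha i (k+1) * b i k ^ 2) * ((u k ω - mu) + gg * (x k ω - m)) ^ 2 := by
      intro ω
      linear_combination (-(2 * (x k ω - m) * ((u k ω - mu) + gg * (x k ω - m)))) * hstat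
    -- integrate the quadratic identity
    have hv2i : Integrable (fun ω => (u k ω - mu) ^ 2) μ := hv2.integrable_sq
    have hy2i : Integrable (fun ω => (x k ω - m) ^ 2) μ := hy2.integrable_sq
    have hw2i : Integrable
        (fun ω => ((DD + gg * b i k) * (x k ω - m) + b i k * (u k ω - mu)) ^ 2) μ :=
      ((hy2.const_mul _).add (hv2.const_mul _)).integrable_sq
    have hvg2i : Integrable (fun ω => ((u k ω - mu) + gg * (x k ω - m)) ^ 2) μ :=
      (hv2.add (hy2.const_mul gg)).integrable_sq
    have hIq : r i k * (∫ ω, (u k ω - mu) ^ 2 ∂μ)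
          + alpha i (k+1) * (∫ ω, ((DD + gg * b i k) * (x k ω - m) + b i k * (u k ω - mu)) ^ 2 ∂μ)
        = (r i k * gg ^ 2 + alpha i (k+1) * DD ^ 2) * (∫ ω, (x k ω - m) ^ 2 ∂μ)
          + (r i k + alpha i (k+1) * b i k ^ 2)
            * (∫ ω, ((u k ω - mu) + gg * (x k ω - m)) ^ 2 ∂μ) := by
      rw [← integral_const_mul, ← integral_const_mul, ← integral_const_mul, ← integral_const_mul,
        ← integral_add (hv2i.const_mul _) (hw2i.const_mul _),
        ← integral_add (hy2i.const_mul _) (hvg2i.const_mul _)]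
      exact integral_congr_ae (Filter.Eventually.of_forall hquad)
    have hIneq : (r i k * gg ^ 2 + alpha i (k+1) * DD ^ 2) * V
        ≤ r i k * Vu
          + alpha i (k+1) * (∫ ω, ((DD + gg * b i k) * (x k ω - m) + b i k * (u k ω - mu)) ^ 2 ∂μ) := by
      rw [hVaru, ← hVary]
      have h1 : 0 ≤ (∫ ω, ((u k ω - mu) + gg * (x k ω - m)) ^ 2 ∂μ) :=
        integral_nonneg fun ω => sq_nonneg _
      have h2 : 0 ≤ (r i k + alpha i (k+1) * b i k ^ 2)
          * (∫ ω, ((u k ω - mu) + gg * (x k ω - m)) ^ 2 ∂μ) :=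
        mul_nonneg (hden2 i k hk).le h1
      linarith [hIq]
    -- mean step : convexity
    have hin : (DDb + ggb * b i k) * m + b i k * (-(ggb * m)) = DDb * m := by ring
    have hstatm : rbar i k * (-(ggb * m)) ^ (2*p-1)
        + alphabar i (k+1) * b i k
          * ((DDb + ggb * b i k) * m + b i k * (-(ggb * m))) ^ (2*p-1) = 0 := by
      rw [hin, hOdd.neg_pow, mul_pow ggb m, mul_pow DDb m]
      linear_combination (-(m ^ (2*p-1))) * hkstat i k hk
    have hMean0 := tangent_min p (rbar i k) (alphabar i (k+1)) ((DDb + ggb * b i k) * m)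
      (b i k) (-(ggb * m)) mu (hrbar i k hk).le (habarpos i (k+1) (by omega)).le hstatm
    rw [hin, hEven.neg_pow, mul_pow ggb m, mul_pow DDb m] at hMean0
    -- assemble
    have hL : alpha i k * V + alphabar i k * m ^ (2*p)
        = q i k * V + (r i k * gg ^ 2 + alpha i (k+1) * DD ^ 2) * V
          + alpha i (k+1) * (V * sig)
          + qbar i k * m ^ (2*p)
          + (rbar i k * (ggb ^ (2*p) * m ^ (2*p))
              + alphabar i (k+1) * (DDb ^ (2*p) * m ^ (2*p))) := by
      rw [halpha i k hk, halphabar i k hk]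
      ring
    rw [hL, hvar, hmean]
    have hdist : alpha i (k+1)
          * ((∫ ω, ((DD + gg * b i k) * (x k ω - m) + b i k * (u k ω - mu)) ^ 2 ∂μ) + V * sig)
        = alpha i (k+1)
            * (∫ ω, ((DD + gg * b i k) * (x k ω - m) + b i k * (u k ω - mu)) ^ 2 ∂μ)
          + alpha i (k+1) * (V * sig) := by
      ring
    linarith [hIneq, hMean0, hdist]
  -- tail inequality
  have key1 : ∀ (d k : ℕ), k + d = N →
      alpha i k * variance (x k) μ + alphabar i k * (∫ ω, x k ω ∂μ) ^ (2*p)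
      ≤ qN i * variance (x N) μ + qbarN i * (∫ ω, x N ω ∂μ) ^ (2*p)
        + ∑ j ∈ Finset.Ico k N,
            (q i j * variance (x j) μ + qbar i j * (∫ ω, x j ω ∂μ) ^ (2*p)
              + r i j * variance (u j) μ + rbar i j * (∫ ω, u j ω ∂μ) ^ (2*p)) := by
    intro d
    induction d with
    | zero =>
      intro k hk
      have hkN : k = N := by omega
      subst hkN
      rw [Finset.Ico_self, Finset.sum_empty, halphaN, halphabarN]
      ring_nf
      exact le_refl _
    | succ d ih =>
      intro k hk
      have hkN : k < N := by omega
      rw [Finset.sum_eq_sum_Ico_succ_bot hkN]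
      have h1 := ih (k+1) (by omega)
      have h2 := hstepLe k hkN
      linarith
  -- conclusion
  have h0 := key1 N 0 (by omega)
  rw [hx00] at h0
  rw [heqpart i]
  simp only [powerVarCost, Finset.range_eq_Ico]
  linarith
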